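/- Let Λ ⊆ Γ be an extension of orders of an étale algebra with Γ/Λ finite, and 𝔓 a prime of Λ. Then the conductor (Λ : Γ) is a 𝔓-primary ideal of Λ if and only if the Λ-module Γ/Λ is 𝔓-primary (i.e., its only associated prime is 𝔓). -/

import Mathlib

/-!
`Γ/Λ` is a finitely generated module over the Noetherian ring `Λ`, and its annihilator is the
conductor. An annihilator that is maximal among those of the nonzero multiples of an element is
prime, so every nonzero element of `Γ/Λ` has a multiple with prime annihilator.

If all these primes equal `𝔓`, elements outside `𝔓` act injectively on `Γ/Λ`, and elements of
`𝔓` act locally nilpotently (an ascending chain of annihilators stabilises), hence nilpotently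
since `Γ` is finitely generated; together this says the conductor is `𝔓`-primary.

Conversely, some nonzero `c ∈ R` kills `Γ/Λ`, so a prime of `Λ` containing the conductor lies over
a nonzero prime of the one-dimensional ring `R` and is maximal. A prime annihilator contains the
radical `𝔓` of the conductor, hence equals it.
-/

/-- The conductor `(Λ : Γ) ∩ Λ` as an ideal of `Λ`: elements `a ∈ Λ` with
`aΓ ⊆ Λ`.  (Since `(Λ : Γ) ⊆ Λ` when `Λ ≤ Γ` and `1 ∈ Γ`, this is the usual
conductor.) -/
def conductorIdeal {R A : Type*} [CommRing R] [CommRing A] [Algebra R A]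
    (Λ Γ : Subalgebra R A) : Ideal Λ where
  carrier := {a : Λ | ∀ g ∈ Γ, (a : A) * g ∈ Λ}
  zero_mem' := by
    intro g hg
    simpa using Λ.zero_mem
  add_mem' := by
    intro a b ha hb g hg
    have := Λ.add_mem (ha g hg) (hb g hg)
    push_cast
    rw [add_mul]
    exact this
  smul_mem' := by
    intro c a ha g hg
    have h1 : ((c • a : Λ) : A) * g = (c : A) * ((a : A) * g) := by
      show ((c * a : Λ) : A) * g = _; push_cast; ring
    rw [h1]
    exact Λ.mul_mem c.2 (ha g hg)

/-- The annihilator in `Λ` of the class of `x` in `A/Λ`: elements `a ∈ Λ` with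
`a·x ∈ Λ`. -/
def annMod {R A : Type*} [CommRing R] [CommRing A] [Algebra R A]
    (Λ : Subalgebra R A) (x : A) : Ideal Λ where
  carrier := {a : Λ | (a : A) * x ∈ Λ}
  zero_mem' := by
    simpa using Λ.zero_mem
  add_mem' := by
    intro a b ha hb
    have := Λ.add_mem ha hb
    show ((a + b : Λ) : A) * x ∈ Λ
    push_cast
    rw [add_mul]
    exact this
  smul_mem' := by
    intro c a ha
    have h1 : ((c • a : Λ) : A) * x = (c : A) * ((a : A) * x) := by
      show ((c * a : Λ) : A) * x = _; push_cast; ring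
    show ((c • a : Λ) : A) * x ∈ Λ
    rw [h1]
    exact Λ.mul_mem c.2 ha

lemma Ideal.IsPrime.isMaximal_of_algebraMap_mem {R S : Type*} [CommRing R] [Ring.DimensionLEOne R]
    [CommRing S] [Algebra R S] [Algebra.IsIntegral R S] {q : Ideal S} (hq : q.IsPrime)
    {c : R} (hc : c ≠ 0) (hcq : algebraMap R S c ∈ q) : q.IsMaximal :=
  Ideal.isMaximal_of_isIntegral_of_isMaximal_comap q <| (hq.comap _).isMaximal fun h ↦
    hc (Ideal.mem_bot.mp (h ▸ Ideal.mem_comap.mpr hcq))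

namespace Subalgebra

variable {R A : Type*} [CommRing R] [CommRing A] [Algebra R A] {Λ Γ : Subalgebra R A}

@[simp]
lemma mem_annMod {x : A} {a : Λ} : a ∈ annMod Λ x ↔ (a : A) * x ∈ Λ := Iff.rfl

@[simp]
lemma mem_conductorIdeal {a : Λ} : a ∈ conductorIdeal Λ Γ ↔ ∀ g ∈ Γ, (a : A) * g ∈ Λ := Iff.rfl

lemma conductorIdeal_le_annMod {x : A} (hx : x ∈ Γ) : conductorIdeal Λ Γ ≤ annMod Λ x :=
  fun _ ha ↦ ha x hx

lemma annMod_ne_top {x : A} (hx : x ∉ Λ) : annMod Λ x ≠ ⊤ := by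
  intro h
  have h1 : (1 : Λ) ∈ annMod Λ x := h ▸ Submodule.mem_top
  exact hx (by simpa using h1)

lemma annMod_le_annMod_mul (b : Λ) (x : A) : annMod Λ x ≤ annMod Λ (b * x) := by
  intro a ha
  rw [mem_annMod, mul_left_comm]
  exact Λ.mul_mem b.2 ha

lemma mem_conductorIdeal_of_span_eq_top {t : Set Γ} (ht : Submodule.span R t = ⊤) {a : Λ}
    (h : ∀ g ∈ t, (a : A) * g ∈ Λ) : a ∈ conductorIdeal Λ Γ := by
  have hspan : Submodule.span R t ≤ (Subalgebra.toSubmodule Λ).comap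
      (LinearMap.mulLeft R (a : A) ∘ₗ Γ.val.toLinearMap) := Submodule.span_le.mpr h
  intro g hg
  exact hspan (ht ▸ Submodule.mem_top : (⟨g, hg⟩ : Γ) ∈ Submodule.span R t)

lemma exists_mem_submonoid_mem_conductorIdeal [Module.Finite R Γ] (S : Submonoid Λ)
    (h : ∀ g ∈ Γ, ∃ s ∈ S, (s : A) * g ∈ Λ) : ∃ s ∈ S, s ∈ conductorIdeal Λ Γ := by
  classical
  obtain ⟨t, ht⟩ := Module.Finite.fg_top (R := R) (M := Γ)
  choose s hsS hs using fun g : Γ ↦ h g g.2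
  refine ⟨∏ g ∈ t, s g, prod_mem fun g _ ↦ hsS g, mem_conductorIdeal_of_span_eq_top ht ?_⟩
  intro g hg
  rw [← Finset.mul_prod_erase t s hg, Subalgebra.coe_mul, mul_comm (s g : A), mul_assoc]
  exact Λ.mul_mem (Subtype.prop _) (hs g)

lemma exists_algebraMap_mem_conductorIdeal [IsDomain R] [Module.Finite R Γ]
    (htor : ∀ x ∈ Γ, ∃ c : R, c ≠ 0 ∧ c • x ∈ Λ) :
    ∃ c : R, c ≠ 0 ∧ algebraMap R Λ c ∈ conductorIdeal Λ Γ := by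
  have hS (g : A) (hg : g ∈ Γ) :
      ∃ s ∈ (nonZeroDivisors R).map (algebraMap R Λ), (s : A) * g ∈ Λ := by
    obtain ⟨c, hc0, hc⟩ := htor g hg
    refine ⟨_, ⟨c, mem_nonZeroDivisors_of_ne_zero hc0, rfl⟩, ?_⟩
    rwa [coe_algebraMap, ← Algebra.smul_def]
  obtain ⟨_, ⟨c, hc, rfl⟩, hmem⟩ := exists_mem_submonoid_mem_conductorIdeal _ hS
  exact ⟨c, nonZeroDivisors.ne_zero hc, hmem⟩

lemma isPrime_annMod_of_maximal {x : A} (hx : x ∉ Λ)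
    (hmax : ∀ b : Λ, (b : A) * x ∉ Λ → annMod Λ ((b : A) * x) ≤ annMod Λ x) :
    (annMod Λ x).IsPrime := by
  refine Ideal.isPrime_iff.mpr ⟨annMod_ne_top hx, fun {α β} hαβ ↦ ?_⟩
  by_cases hβ : β ∈ annMod Λ x
  · exact Or.inr hβ
  · refine Or.inl (hmax β hβ ?_)
    rw [mem_annMod, ← mul_assoc, ← Subalgebra.coe_mul]
    exact hαβ

section Noetherian

variable [IsNoetherianRing Λ]

lemma exists_isPrime_annMod_mul {x : A} (hx : x ∉ Λ) :
    ∃ b : Λ, (b : A) * x ∉ Λ ∧ (annMod Λ ((b : A) * x)).IsPrime := by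
  obtain ⟨_, ⟨b, hb, rfl⟩, hmax⟩ := set_has_maximal_iff_noetherian.mpr inferInstance
    {J : Ideal Λ | ∃ b : Λ, (b : A) * x ∉ Λ ∧ annMod Λ ((b : A) * x) = J}
    ⟨_, 1, by simpa using hx, rfl⟩
  refine ⟨b, hb, isPrime_annMod_of_maximal hb fun b' hb' ↦ ?_⟩
  have hmul : ((b' * b : Λ) : A) * x = b' * (b * x) := by rw [Subalgebra.coe_mul, mul_assoc]
  rw [← hmul] at hb' ⊢
  have hle : annMod Λ ((b : A) * x) ≤ annMod Λ (((b' * b : Λ) : A) * x) :=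
    hmul ▸ annMod_le_annMod_mul b' _
  exact (eq_of_le_of_not_lt hle (hmax _ ⟨_, hb', rfl⟩)).ge

lemma mem_of_mul_mem_of_forall_notMem_annMod (hle : Λ ≤ Γ) {β : Λ}
    (hβ : ∀ y ∈ Γ, y ∉ Λ → (annMod Λ y).IsPrime → β ∉ annMod Λ y)
    {x : A} (hx : x ∈ Γ) (hβx : (β : A) * x ∈ Λ) : x ∈ Λ := by
  by_contra hxΛ
  obtain ⟨b, hbx, hprime⟩ := exists_isPrime_annMod_mul hxΛ
  refine hβ _ (Γ.mul_mem (hle b.2) hx) hbx hprime ?_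
  rw [mem_annMod, mul_left_comm]
  exact Λ.mul_mem b.2 hβx

lemma exists_pow_mul_mem_of_forall_mem_annMod (hle : Λ ≤ Γ) {a : Λ}
    (ha : ∀ y ∈ Γ, y ∉ Λ → (annMod Λ y).IsPrime → a ∈ annMod Λ y)
    {x : A} (hx : x ∈ Γ) : ∃ n : ℕ, (a : A) ^ n * x ∈ Λ := by
  have hmono (n : ℕ) : annMod Λ ((a : A) ^ n * x) ≤ annMod Λ ((a : A) ^ (n + 1) * x) := by
    simpa only [pow_succ', mul_assoc] using annMod_le_annMod_mul a ((a : A) ^ n * x)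
  obtain ⟨N, hN⟩ := monotone_stabilizes_iff_noetherian.mpr inferInstance
    ⟨fun n ↦ annMod Λ ((a : A) ^ n * x), monotone_nat_of_le_succ hmono⟩
  by_contra! hnot
  obtain ⟨b, hbz, hprime⟩ := exists_isPrime_annMod_mul (hnot N)
  have hbzΓ : (b : A) * ((a : A) ^ N * x) ∈ Γ :=
    Γ.mul_mem (hle b.2) (Γ.mul_mem (pow_mem (hle a.2) N) hx)
  have hb : b ∈ annMod Λ ((a : A) ^ (N + 1) * x) := by
    rw [mem_annMod, pow_succ', mul_assoc, mul_left_comm]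
    exact ha _ hbzΓ hbz hprime
  exact hbz ((hN (N + 1) N.le_succ).ge hb)

lemma mem_radical_conductorIdeal_of_forall_mem_annMod [Module.Finite R Γ] (hle : Λ ≤ Γ)
    {a : Λ} (ha : ∀ y ∈ Γ, y ∉ Λ → (annMod Λ y).IsPrime → a ∈ annMod Λ y) :
    a ∈ (conductorIdeal Λ Γ).radical := by
  have hpow (g : A) (hg : g ∈ Γ) : ∃ s ∈ Submonoid.powers a, (s : A) * g ∈ Λ := by
    obtain ⟨n, hn⟩ := exists_pow_mul_mem_of_forall_mem_annMod hle ha hg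
    exact ⟨a ^ n, ⟨n, rfl⟩, hn⟩
  obtain ⟨_, ⟨n, rfl⟩, hn⟩ := exists_mem_submonoid_mem_conductorIdeal _ hpow
  exact ⟨n, hn⟩

end Noetherian

end Subalgebra

open Subalgebra in
theorem statement17 {R : Type*} {A : Type u} [CommRing R] [IsDedekindDomain R]
    [CommRing A] [Algebra R A]
    (Λ Γ : Subalgebra R A)
    (hΛfin : Module.Finite R Λ)
    (hΓfin : Module.Finite R Γ)
    (hle : Λ ≤ Γ)
    (htor : ∀ x ∈ Γ, ∃ c : R, c ≠ 0 ∧ c • x ∈ Λ)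
    (𝔓 : Ideal Λ) (hP : 𝔓.IsPrime) :
    ((conductorIdeal Λ Γ).IsPrimary ∧ (conductorIdeal Λ Γ).radical = 𝔓) ↔
      ((∃ x ∈ Γ, x ∉ Λ ∧ annMod Λ x = 𝔓) ∧
        (∀ x ∈ Γ, x ∉ Λ → (annMod Λ x).IsPrime → annMod Λ x = 𝔓)) := by
  have : IsNoetherianRing Λ := isNoetherian_of_tower R inferInstance
  constructor
  · rintro ⟨hprim, hrad⟩
    obtain ⟨c, hc0, hc⟩ := exists_algebraMap_mem_conductorIdeal htor
    have hPmax : 𝔓.IsMaximal := hP.isMaximal_of_algebraMap_mem hc0 (hrad ▸ Ideal.le_radical hc)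
    have huniq (x : A) (hxΓ : x ∈ Γ) (hxΛ : x ∉ Λ) (hx : (annMod Λ x).IsPrime) :
        annMod Λ x = 𝔓 :=
      (hPmax.eq_of_le (annMod_ne_top hxΛ)
        (hrad ▸ hx.radical_le_iff.mpr (conductorIdeal_le_annMod hxΓ))).symm
    obtain ⟨z, hzΓ, hzΛ⟩ : ∃ z ∈ Γ, z ∉ Λ := by
      by_contra! h
      exact hprim.ne_top ((Ideal.eq_top_iff_one _).mpr fun g hg ↦ by simpa using h g hg)
    obtain ⟨b, hbz, hprime⟩ := exists_isPrime_annMod_mul hzΛ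
    have hbzΓ : (b : A) * z ∈ Γ := Γ.mul_mem (hle b.2) hzΓ
    exact ⟨⟨_, hbzΓ, hbz, huniq _ hbzΓ hbz hprime⟩, huniq⟩
  · rintro ⟨⟨x₀, hx₀Γ, hx₀Λ, rfl⟩, huniq⟩
    have hrad : (conductorIdeal Λ Γ).radical = annMod Λ x₀ :=
      le_antisymm (hP.radical_le_iff.mpr (conductorIdeal_le_annMod hx₀Γ)) fun a ha ↦
        mem_radical_conductorIdeal_of_forall_mem_annMod hle fun y hyΓ hyΛ hy ↦
          huniq y hyΓ hyΛ hy ▸ ha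
    refine ⟨Ideal.isPrimary_iff.mpr ⟨?_, fun {α β} hαβ ↦ ?_⟩, hrad⟩
    · exact ne_top_of_le_ne_top (annMod_ne_top hx₀Λ) (conductorIdeal_le_annMod hx₀Γ)
    rw [hrad]
    refine or_iff_not_imp_right.mpr fun hβ g hg ↦ ?_
    refine mem_of_mul_mem_of_forall_notMem_annMod hle (fun y hyΓ hyΛ hy ↦ huniq y hyΓ hyΛ hy ▸ hβ)
      (Γ.mul_mem (hle α.2) hg) ?_
    rw [← mul_assoc, mul_comm (β : A), ← Subalgebra.coe_mul]
    exact hαβ g hg
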